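/- The matrix products UV and VU are the diagonal matrices: UV = diag(xy, xy + t_1, xy + t_0 + t_1 + t_2, …, xy + (n−1)t_0 + t_1 + ⋯ + t_n), i.e. (UV)_{00} = xy and (UV)_{ii} = xy + (i−1)t_0 + t_1 + ⋯ + t_i for 1 ≤ i ≤ n; and VU = diag(xy + (n−1)t_0 + t_1 + ⋯ + t_n, xy − t_0, xy + t_1, …, xy + (n−2)t_0 + t_1 + ⋯ + t_{n−1}), i.e. (VU)_{00} = xy + (n−1)t_0 + t_1 + ⋯ + t_n, (VU)_{11} = xy − t_0, and (VU)_{ii} = xy + (i−2)t_0 + t_1 + ⋯ + t_{i−1} for 2 ≤ i ≤ n; all off-diagonal entries of UV and VU vanish. -/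

import Mathlib

/-!
Context: `B = ℂ[t₀,…,tₙ]`, `R = B⟨x,y⟩/(xy − yx − t₀)`, and `U`, `V` the
`(n+1)×(n+1)` matrices over `R` defined below (restrictions of `u^t`, `v^t`).
Statement 15: `UV` and `VU` are the diagonal matrices
`UV = diag(xy, xy + t₁, xy + t₀ + t₁ + t₂, …, xy + (n−1)t₀ + t₁ + ⋯ + tₙ)` and
`VU = diag(xy + (n−1)t₀ + t₁ + ⋯ + tₙ, xy − t₀, xy + t₁, …, xy + (n−2)t₀ + t₁ + ⋯ + t_{n−1})`.
-/

noncomputable section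

/-- The polynomial base ring `B = ℂ[t₀,…,tₙ]`. -/
abbrev Bpoly (n : ℕ) : Type := MvPolynomial (Fin (n + 1)) ℂ

/-- The defining relation `xy = yx + t₀` of `R = B⟨x,y⟩/(xy − yx − t₀)`,
with `x = ι 0`, `y = ι 1`. -/
inductive Rrel (n : ℕ) : FreeAlgebra (Bpoly n) (Fin 2) → FreeAlgebra (Bpoly n) (Fin 2) → Prop
  | comm : Rrel n (FreeAlgebra.ι (Bpoly n) 0 * FreeAlgebra.ι (Bpoly n) 1)
      (FreeAlgebra.ι (Bpoly n) 1 * FreeAlgebra.ι (Bpoly n) 0 +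
        algebraMap (Bpoly n) (FreeAlgebra (Bpoly n) (Fin 2)) (MvPolynomial.X 0))

/-- `R = B⟨x,y⟩/(xy − yx − t₀)`. -/
abbrev Rring (n : ℕ) : Type := RingQuot (Rrel n)

/-- `x ∈ R`. -/
def Rx (n : ℕ) : Rring n := RingQuot.mkAlgHom (Bpoly n) (Rrel n) (FreeAlgebra.ι (Bpoly n) 0)

/-- `y ∈ R`. -/
def Ry (n : ℕ) : Rring n := RingQuot.mkAlgHom (Bpoly n) (Rrel n) (FreeAlgebra.ι (Bpoly n) 1)

/-- `tⱼ ∈ R`, the image of the deformation parameter `tⱼ` (`0 ≤ j ≤ n`). -/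
def Rt (n : ℕ) (j : ℕ) : Rring n :=
  algebraMap (Bpoly n) (Rring n) (MvPolynomial.X (Fin.ofNat (n + 1) j))

/-- `d i = xy + (i−1)t₀ + t₁ + ⋯ + tᵢ ∈ R` (for `1 ≤ i ≤ n`). -/
def dEl (n : ℕ) (i : ℕ) : Rring n :=
  Rx n * Ry n + (i - 1) • Rt n 0 + ∑ j ∈ Finset.Icc 1 i, Rt n j

/-- The matrix `U` over `R` (restriction of `u^t` to the chart `𝓡₀`):
`U_{0,1} = x`, `U_{i,i+1} = xy + (i−1)t₀ + t₁ + ⋯ + tᵢ` for `1 ≤ i ≤ n−1`,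
`U_{n,0} = xy + (n−1)t₀ + t₁ + ⋯ + tₙ`, all other entries `0`. -/
def Umat (n : ℕ) : Matrix (Fin (n + 1)) (Fin (n + 1)) (Rring n) :=
  Matrix.of fun i j => if j = i + 1 then (if i = 0 then Rx n else dEl n (i : ℕ)) else 0

/-- The matrix `V` over `R` (restriction of `v^t` to the chart `𝓡₀`):
`V_{1,0} = y`, `V_{i+1,i} = 1` for `1 ≤ i ≤ n−1`, `V_{0,n} = 1`,
all other entries `0`. -/
def Vmat (n : ℕ) : Matrix (Fin (n + 1)) (Fin (n + 1)) (Rring n) :=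
  Matrix.of fun i j => if i = j + 1 then (if j = 0 then Ry n else 1) else 0

lemma key (n : ℕ) : Ry n * Rx n = Rx n * Ry n - Rt n 0 := by
  have h := RingQuot.mkAlgHom_rel (Bpoly n) (Rrel.comm (n := n))
  simp only [map_mul, map_add, AlgHom.commutes] at h
  rw [Rx, Ry, h]; show _ = _ + _ - _; rw [Rt, (Fin.ext (by simp) : Fin.ofNat (n + 1) 0 = 0)]; abel


theorem stmt15 (n : ℕ) (hn : 1 ≤ n) :
    Umat n * Vmat n =
      Matrix.diagonal (fun i : Fin (n + 1) => if (i : ℕ) = 0 then Rx n * Ry n else dEl n (i : ℕ)) ∧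
    Vmat n * Umat n =
      Matrix.diagonal (fun i : Fin (n + 1) =>
        if (i : ℕ) = 0 then dEl n n
        else if (i : ℕ) = 1 then Rx n * Ry n - Rt n 0
        else dEl n ((i : ℕ) - 1)) := by
  have hval0 : ∀ i : Fin (n+1), (i : ℕ) = 0 ↔ i = 0 := fun i => ⟨fun h => Fin.ext h, fun h => h ▸ rfl⟩
  constructor
  · ext i k
    have hUV : (Umat n * Vmat n) i k =
        (if i = 0 then Rx n else dEl n (i : ℕ)) * Vmat n (i+1) k := by
      rw [Matrix.mul_apply, Finset.sum_eq_single (i+1)]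
      · simp [Umat]
      · intro b _ hb; simp [Umat, hb]
      · simp
    rw [hUV, Matrix.diagonal_apply]
    rcases eq_or_ne i k with rfl | hik
    · rw [if_pos rfl]
      simp only [Vmat, Matrix.of_apply, if_pos rfl, hval0]
      rcases eq_or_ne i 0 with rfl | h0
      · simp
      · simp [h0]
    · rw [if_neg hik]
      have : ¬ (i + 1 = k + 1) := fun h => hik (add_right_cancel h)
      simp [Vmat, this]
  · ext i k
    have hVU : (Vmat n * Umat n) i k =
        (if i - 1 = 0 then Ry n else 1) * Umat n (i-1) k := by
      rw [Matrix.mul_apply, Finset.sum_eq_single (i-1)]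
      · simp [Vmat, sub_add_cancel]
      · intro b _ hb
        have : ¬ i = b + 1 := fun h => hb (by rw [h, add_sub_cancel_right])
        simp [Vmat, this]
      · simp
    rw [hVU, Matrix.diagonal_apply]
    have hsub : ∀ h : i ≠ 0, ((i - 1 : Fin (n+1)) : ℕ) = (i : ℕ) - 1 := by
      intro h
      rw [Fin.coe_sub_one, if_neg h]
    rcases eq_or_ne i k with rfl | hik
    · rw [if_pos rfl]
      simp only [Umat, Matrix.of_apply, if_pos (sub_add_cancel i 1).symm]
      rcases eq_or_ne i 0 with rfl | h0
      · -- i = 0 : i - 1 = last n ≠ 0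
        have hlast : ((0 : Fin (n+1)) - 1 : Fin (n+1)) ≠ 0 := by
          rw [Ne, sub_eq_zero]
          intro h
          have := congrArg Fin.val h.symm
          simp [Fin.val_one', Nat.mod_eq_of_lt (by omega : 1 < n + 1)] at this
        have hlastval : (((0 : Fin (n+1)) - 1 : Fin (n+1)) : ℕ) = n := by
          rw [Fin.coe_sub_one, if_pos rfl]
        have hne : n ≠ 0 := by omega
        simp [hlast, hlastval, hne]
      · rcases eq_or_ne i 1 with rfl | h1
        · have h10 : ((1:Fin (n+1)) - 1 : Fin (n+1)) = 0 := by rw [sub_eq_zero]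
          have hv1 : ((1 : Fin (n+1)) : ℕ) = 1 := by
            simp [Fin.val_one', Nat.mod_eq_of_lt (by omega : 1 < n + 1)]
          have hne : n ≠ 0 := by omega
          have hpos : 0 < n := hn
          simp [h10, hv1, key, hne, hpos]
        · have hs0 : (i - 1 : Fin (n+1)) ≠ 0 := by
            rw [Ne, sub_eq_zero]; exact h1
          have hv0 : (i : ℕ) ≠ 0 := fun h => h0 ((hval0 i).mp h)
          have hv1 : (i : ℕ) ≠ 1 := by
            intro h
            apply h1
            apply Fin.ext
            simp [h, Fin.val_one', Nat.mod_eq_of_lt (by omega : 1 < n + 1)]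
          simp [hs0, hv0, hv1, hsub h0]
    · rw [if_neg hik]
      simp [Umat, sub_add_cancel, Ne.symm hik]


end
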